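/- arXiv:2106.11806 — 3 statements merged into one kernel-verified Lean document; each statement's English description precedes it below -/
import Mathlib

section
/- Let d ≥ 1 be an integer, 1 ≤ r < ∞, and β > d(1 - 1/r). There exists a constant C > 0 such that for every measurable function F : ℝ^d → [0, ∞], the periodization of F satisfies ( ∫_{[0,1]^d} ( Σ_{n ∈ ℤ^d} F(x + n) )^r dx )^{1/r} ≤ C ( ∫_{ℝ^d} (1 + |x|)^{β r} F(x)^r dx )^{1/r}. -/
open MeasureTheory Real ENNReal

/-!
Fix `γ` with `d < γ` and `γ (r - 1) ≤ β r`. Factoring `F (x + n)` as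
`(1 + |x + n|)^(-γ) · (1 + |x + n|)^γ F (x + n)`, the weighted Hölder inequality gives
`(∑ₙ F (x + n))^r ≤ (∑ₙ (1 + |x + n|)^(-γ))^(r - 1) · ∑ₙ (1 + |x + n|)^(β r) F (x + n)^r`.
Since `γ > d`, the first factor is bounded uniformly on the unit cube, and since the cube tiles
`ℝ^d` under `ℤ^d`, integrating the second factor over the cube gives `∫ (1 + |x|)^(β r) F(x)^r`.
-/

lemma one_add_norm_rpow_neg_le {E : Type*} [SeminormedAddCommGroup E] {γ c : ℝ} (hγ : 0 ≤ γ)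
    {u v : E} (huv : ‖u - v‖ ≤ c) :
    (1 + ‖u‖) ^ (-γ) ≤ (1 + c) ^ γ * (1 + ‖v‖) ^ (-γ) := by
  have hc : 0 ≤ c := (norm_nonneg _).trans huv
  have hv : 1 + ‖v‖ ≤ (1 + c) * (1 + ‖u‖) := by
    nlinarith [norm_le_norm_add_norm_sub u v, norm_nonneg u]
  calc (1 + ‖u‖) ^ (-γ) = (1 + c) ^ γ * ((1 + c) * (1 + ‖u‖)) ^ (-γ) := by
        rw [mul_rpow (by positivity) (by positivity), ← mul_assoc, ← Real.rpow_add (by positivity),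
          add_neg_cancel, Real.rpow_zero, one_mul]
    _ ≤ (1 + c) ^ γ * (1 + ‖v‖) ^ (-γ) :=
        mul_le_mul_of_nonneg_left (rpow_le_rpow_of_nonpos (by positivity) hv (neg_nonpos.mpr hγ))
          (by positivity)

lemma ENNReal.rpow_tsum_mul_le {ι : Type*} {p : ℝ} (hp : 1 ≤ p) (w f : ι → ℝ≥0∞) :
    (∑' i, w i * f i) ^ p ≤ (∑' i, w i) ^ (p - 1) * ∑' i, w i * f i ^ p := by
  have hp₀ : 0 < p := by linarith
  have hholder : ∑' i, w i * f i ≤ (∑' i, w i) ^ (1 - p⁻¹) * (∑' i, w i * f i ^ p) ^ p⁻¹ := by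
    rw [ENNReal.tsum_eq_iSup_sum]
    refine iSup_le fun s => (inner_le_weight_mul_Lp_of_nonneg s hp w f).trans ?_
    gcongr
    · exact sub_nonneg.mpr (inv_le_one_of_one_le₀ hp)
    all_goals exact ENNReal.sum_le_tsum s
  calc (∑' i, w i * f i) ^ p
      ≤ ((∑' i, w i) ^ (1 - p⁻¹) * (∑' i, w i * f i ^ p) ^ p⁻¹) ^ p := by gcongr
    _ = (∑' i, w i) ^ (p - 1) * ∑' i, w i * f i ^ p := by
        rw [mul_rpow_of_nonneg _ _ hp₀.le, ← rpow_mul, ← rpow_mul, inv_mul_cancel₀ hp₀.ne',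
          rpow_one, sub_mul, one_mul, inv_mul_cancel₀ hp₀.ne']

lemma rpow_tsum_le_weighted_tsum {E ι : Type*} [SeminormedAddCommGroup E] {r β γ : ℝ}
    (hr : 1 ≤ r) (hγ : γ * (r - 1) ≤ β * r) (F : E → ℝ≥0∞) (y : ι → E) :
    (∑' n, F (y n)) ^ r ≤ (∑' n, ENNReal.ofReal ((1 + ‖y n‖) ^ (-γ))) ^ (r - 1) *
      ∑' n, ENNReal.ofReal ((1 + ‖y n‖) ^ (β * r)) * F (y n) ^ r := by
  have hr₀ : 0 < r := by linarith
  set w := fun n => ENNReal.ofReal ((1 + ‖y n‖) ^ (-γ))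
  set f := fun n => ENNReal.ofReal ((1 + ‖y n‖) ^ γ) * F (y n)
  have hwf (n) : F (y n) = w n * f n := by
    rw [← mul_assoc, ← ofReal_mul (by positivity), ← Real.rpow_add (by positivity),
      neg_add_cancel, Real.rpow_zero, ofReal_one, one_mul]
  have hwfr (n) : w n * f n ^ r ≤ ENNReal.ofReal ((1 + ‖y n‖) ^ (β * r)) * F (y n) ^ r := by
    rw [mul_rpow_of_nonneg _ _ hr₀.le, ofReal_rpow_of_nonneg (by positivity) hr₀.le,
      ← rpow_mul (by positivity), ← mul_assoc, ← ofReal_mul (by positivity),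
      ← Real.rpow_add (by positivity)]
    gcongr
    · linarith [norm_nonneg (y n)]
    · linarith
  calc (∑' n, F (y n)) ^ r = (∑' n, w n * f n) ^ r := by simp_rw [hwf]
    _ ≤ (∑' n, w n) ^ (r - 1) * ∑' n, w n * f n ^ r := ENNReal.rpow_tsum_mul_le hr w f
    _ ≤ _ := mul_le_mul_right (ENNReal.tsum_le_tsum hwfr) _

lemma exists_lt_and_mul_sub_one_le {a r β : ℝ} (hr : 1 ≤ r) (hβ : a * (1 - 1 / r) < β) :
    ∃ γ, a < γ ∧ γ * (r - 1) ≤ β * r := by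
  have hr₀ : r ≠ 0 := by positivity
  refine ⟨β + a / r, by linarith [show a * (1 - 1 / r) = a - a / r by ring], ?_⟩
  calc (β + a / r) * (r - 1) = β * r - (β - a * (1 - 1 / r)) := by field_simp; ring
    _ ≤ β * r := by linarith

noncomputable def latticePoint (d : ℕ) (n : Fin d → ℤ) : EuclideanSpace ℝ (Fin d) :=
  (WithLp.equiv 2 (Fin d → ℝ)).symm fun i => (n i : ℝ)

def unitCube (d : ℕ) : Set (EuclideanSpace ℝ (Fin d)) := {x | ∀ i, x i ∈ Set.Icc (0 : ℝ) 1}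

noncomputable def latticeEquiv (d : ℕ) :
    (Fin d → ℤ) ≃ (Submodule.span ℤ (Set.range (PiLp.basisFun 2 ℝ (Fin d)))).toAddSubgroup :=
  ((PiLp.basisFun 2 ℝ (Fin d)).restrictScalars ℤ).equivFun.symm.toEquiv

section UnitCube

variable {d : ℕ}

lemma coe_latticeEquiv (n : Fin d → ℤ) :
    (latticeEquiv d n : EuclideanSpace ℝ (Fin d)) = latticePoint d n := by
  ext i
  simp [latticeEquiv, latticePoint, Module.Basis.equivFun_symm_apply,
    Module.Basis.restrictScalars_apply, Pi.single_apply]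

lemma unitCube_eq_preimage :
    unitCube d =
      (MeasurableEquiv.toLp 2 (Fin d → ℝ)).symm ⁻¹' Set.univ.pi fun _ => Set.Icc 0 1 := by
  ext x
  simp [unitCube, Set.mem_Icc, Pi.le_def, forall_and]

lemma measurableSet_unitCube : MeasurableSet (unitCube d) := by
  rw [unitCube_eq_preimage]
  exact (MeasurableSet.univ_pi fun _ => measurableSet_Icc).preimage (MeasurableEquiv.measurable _)

lemma volume_unitCube : volume (unitCube d) = 1 := by
  rw [unitCube_eq_preimage,
    (EuclideanSpace.volume_preserving_symm_measurableEquiv_toLp (Fin d)).measure_preimage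
      (MeasurableSet.univ_pi fun _ => measurableSet_Icc).nullMeasurableSet, volume_pi_pi]
  simp

lemma unitCube_ae_eq_fundamentalDomain :
    unitCube d =ᵐ[volume] ZSpan.fundamentalDomain (PiLp.basisFun 2 ℝ (Fin d)) := by
  have hIco : ZSpan.fundamentalDomain (PiLp.basisFun 2 ℝ (Fin d)) =
      (MeasurableEquiv.toLp 2 (Fin d → ℝ)).symm ⁻¹' Set.univ.pi fun _ => Set.Ico 0 1 := by
    ext x
    simp [ZSpan.fundamentalDomain]
  rw [unitCube_eq_preimage, hIco]
  refine (EuclideanSpace.volume_preserving_symm_measurableEquiv_toLp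
    (Fin d)).quasiMeasurePreserving.preimage_ae_eq ?_
  rw [volume_pi]
  exact (Measure.pi_Ico_ae_eq_pi_Icc (s := Set.univ)).symm

lemma lintegral_unitCube_tsum_latticePoint {g : EuclideanSpace ℝ (Fin d) → ℝ≥0∞}
    (hg : Measurable g) :
    ∫⁻ x in unitCube d, ∑' n, g (x + latticePoint d n) = ∫⁻ y, g y := by
  have : Countable (Submodule.span ℤ (Set.range (PiLp.basisFun 2 ℝ (Fin d)))).toAddSubgroup :=
    Countable.of_equiv _ (latticeEquiv d)
  rw [setLIntegral_congr unitCube_ae_eq_fundamentalDomain,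
    lintegral_tsum (f := fun n x => g (x + latticePoint d n))
      fun n => (hg.comp (measurable_add_const (latticePoint d n))).aemeasurable,
    (ZSpan.isAddFundamentalDomain' (PiLp.basisFun 2 ℝ (Fin d)) volume).lintegral_eq_tsum'' g,
    ← (latticeEquiv d).tsum_eq]
  refine tsum_congr fun n => lintegral_congr fun x => ?_
  rw [AddSubgroup.vadd_def, vadd_eq_add, coe_latticeEquiv, add_comm]

lemma norm_sub_le_sqrt_of_mem_unitCube {x y : EuclideanSpace ℝ (Fin d)} (hx : x ∈ unitCube d)
    (hy : y ∈ unitCube d) : ‖x - y‖ ≤ √d := by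
  rw [EuclideanSpace.norm_eq]
  gcongr
  calc ∑ i, ‖(x - y) i‖ ^ 2 ≤ ∑ _i : Fin d, 1 := Finset.sum_le_sum fun i _ => by
        obtain ⟨⟨hx0, hx1⟩, ⟨hy0, hy1⟩⟩ := And.intro (hx i) (hy i)
        rw [PiLp.sub_apply, Real.norm_eq_abs, sq_abs]
        nlinarith
    _ = d := by simp

lemma exists_tsum_one_add_norm_rpow_neg_le {γ : ℝ} (hγ : (d : ℝ) < γ) :
    ∃ B : ℝ, 0 < B ∧ ∀ x ∈ unitCube d,
      ∑' n, ENNReal.ofReal ((1 + ‖x + latticePoint d n‖) ^ (-γ)) ≤ ENNReal.ofReal B := by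
  set w := fun y : EuclideanSpace ℝ (Fin d) => ENNReal.ofReal ((1 + ‖y‖) ^ (-γ))
  have hJ : ∫⁻ y, w y ≠ ⊤ := (finite_integral_one_add_norm (by simpa using hγ)).ne
  set c := (1 + √d) ^ γ
  refine ⟨c * ((∫⁻ y, w y).toReal + 1), by positivity, fun x hx => ?_⟩
  -- Across the cube each term moves by at most the factor `c`, so the sum at `x` is dominated by
  -- `c` times the average of the sum over the cube, and that average unfolds to `∫ w`.
  have hcompare : ∀ y ∈ unitCube d,
      ∑' n, w (x + latticePoint d n) ≤ ENNReal.ofReal c * ∑' n, w (y + latticePoint d n) := by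
    intro y hy
    rw [← ENNReal.tsum_mul_left]
    refine ENNReal.tsum_le_tsum fun n => ?_
    rw [← ofReal_mul (by positivity)]
    refine ofReal_le_ofReal (one_add_norm_rpow_neg_le ((Nat.cast_nonneg d).trans hγ.le) ?_)
    rw [add_sub_add_right_eq_sub]
    exact norm_sub_le_sqrt_of_mem_unitCube hx hy
  calc ∑' n, w (x + latticePoint d n)
      = ∫⁻ _ in unitCube d, ∑' n, w (x + latticePoint d n) := by
        rw [setLIntegral_const, volume_unitCube, mul_one]
    _ ≤ ∫⁻ y in unitCube d, ENNReal.ofReal c * ∑' n, w (y + latticePoint d n) :=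
        setLIntegral_mono' measurableSet_unitCube hcompare
    _ = ENNReal.ofReal c * ∫⁻ y, w y := by
        rw [lintegral_const_mul' _ _ ofReal_ne_top,
          lintegral_unitCube_tsum_latticePoint (by fun_prop)]
    _ ≤ ENNReal.ofReal (c * ((∫⁻ y, w y).toReal + 1)) := by
        rw [ofReal_mul (by positivity)]
        gcongr
        rw [← ofReal_toReal hJ]
        exact ofReal_le_ofReal (by simp)

end UnitCube

theorem periodization_Lr_bound_general (d : ℕ) (r β : ℝ)
    (hr : 1 ≤ r) (hβ : d * (1 - 1 / r) < β) :
    ∃ C : ℝ, 0 < C ∧ ∀ F : EuclideanSpace ℝ (Fin d) → ℝ≥0∞, Measurable F →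
      (∫⁻ x in {x : EuclideanSpace ℝ (Fin d) | ∀ i, x i ∈ Set.Icc (0 : ℝ) 1},
          (∑' n : Fin d → ℤ, F (x + (WithLp.equiv 2 (Fin d → ℝ)).symm (fun i => (n i : ℝ)))) ^ r) ^ (1 / r)
        ≤ ENNReal.ofReal C *
            (∫⁻ x, ENNReal.ofReal ((1 + ‖x‖) ^ (β * r)) * F x ^ r) ^ (1 / r) := by
  obtain ⟨γ, hdγ, hγ⟩ := exists_lt_and_mul_sub_one_le hr hβ
  obtain ⟨B, hB, hweight⟩ := exists_tsum_one_add_norm_rpow_neg_le hdγ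
  refine ⟨B ^ ((r - 1) / r), by positivity, fun F hF => ?_⟩
  change (∫⁻ x in unitCube d, (∑' n, F (x + latticePoint d n)) ^ r) ^ (1 / r) ≤ _
  set g := fun y : EuclideanSpace ℝ (Fin d) => ENNReal.ofReal ((1 + ‖y‖) ^ (β * r)) * F y ^ r
  have hpointwise : ∀ x ∈ unitCube d,
      (∑' n, F (x + latticePoint d n)) ^ r ≤
        ENNReal.ofReal B ^ (r - 1) * ∑' n, g (x + latticePoint d n) :=
    fun x hx => (rpow_tsum_le_weighted_tsum hr hγ F _).trans
      (mul_le_mul_left (rpow_le_rpow (hweight x hx) (by linarith)) _)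
  have hintegral : ∫⁻ x in unitCube d, (∑' n, F (x + latticePoint d n)) ^ r
      ≤ ENNReal.ofReal B ^ (r - 1) * ∫⁻ y, g y := by
    calc _ ≤ ∫⁻ x in unitCube d, ENNReal.ofReal B ^ (r - 1) * ∑' n, g (x + latticePoint d n) :=
          setLIntegral_mono' measurableSet_unitCube hpointwise
      _ = _ := by
          rw [lintegral_const_mul' _ _ (by finiteness),
            lintegral_unitCube_tsum_latticePoint (by fun_prop)]
  calc _ ≤ (ENNReal.ofReal B ^ (r - 1) * ∫⁻ y, g y) ^ (1 / r) := by gcongr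
    _ = ENNReal.ofReal (B ^ ((r - 1) / r)) * (∫⁻ y, g y) ^ (1 / r) := by
        rw [mul_rpow_of_nonneg _ _ (by positivity), ← ENNReal.rpow_mul, ofReal_rpow_of_pos hB,
          mul_one_div]

/-- Bound on the `L^r` norm (on the fundamental cube) of the `ℤ^d`-periodization of a
nonnegative function `F` by the weighted `L^r(ℝ^d)` norm `‖(1+|x|)^β F‖_{L^r}`,
valid when `β > d(1 - 1/r)`. -/
theorem periodization_Lr_bound (d : ℕ) (hd : 1 ≤ d) (r β : ℝ)
    (hr : 1 ≤ r) (hβ : d * (1 - 1 / r) < β) :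
    ∃ C : ℝ, 0 < C ∧ ∀ F : EuclideanSpace ℝ (Fin d) → ℝ≥0∞, Measurable F →
      (∫⁻ x in {x : EuclideanSpace ℝ (Fin d) | ∀ i, x i ∈ Set.Icc (0 : ℝ) 1},
          (∑' n : Fin d → ℤ, F (x + (WithLp.equiv 2 (Fin d → ℝ)).symm (fun i => (n i : ℝ)))) ^ r) ^ (1 / r)
        ≤ ENNReal.ofReal C *
            (∫⁻ x, ENNReal.ofReal ((1 + ‖x‖) ^ (β * r)) * F x ^ r) ^ (1 / r) :=
  periodization_Lr_bound_general d r β hr hβ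
end

section
/- Let A ≥ 0 and b, c > 0 satisfy c² = b² + A². Then for every t ≥ 0, e^{-2At} [ (cos(bt) + (A/b) sin(bt))² / c² + (sin(bt))² / b² ] + 4A ∫₀ᵗ e^{-2As} (sin(bs))²/b² ds = 1/c². (With A = |n|/2, b = √(1 + 3|n|²/4), c = √(1 + |n|²), this shows that the variance α_N = E[Φ_N(t,x)²] = Σ_{|n|≤N} ⟨n⟩^{-2} of the stochastic convolution with Gaussian free field initial data is independent of time.) -/
/-!
Put `u(s) = e^{-As}(cos bs + (A/b) sin bs)` and `v(s) = e^{-As} sin(bs)/b`, the solutions of the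
damped oscillator `y'' + 2A y' + c² y = 0` with initial data `(1, 0)` and `(0, 1)`. They satisfy
`u' = -c² v` and `v' = u - 2A v`, so the energy `u²/c² + v²` decays at the rate
`(u²/c² + v²)' = -4A v²`. The first bracket of the identity is the energy at time `t`, the
integral is the energy dissipated on `[0, t]`, and the energy at time `0` is `1/c²`.
-/

open Real

noncomputable section

def dampedCos (A b s : ℝ) : ℝ := exp (-A * s) * (cos (b * s) + A / b * sin (b * s))

def dampedSin (A b s : ℝ) : ℝ := exp (-A * s) * sin (b * s) / b

theorem hasDerivAt_sq_div_add_sq_of_damped {u v : ℝ → ℝ} {k A s : ℝ} (hk : k ≠ 0)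
    (hu : HasDerivAt u (-k * v s) s) (hv : HasDerivAt v (u s - 2 * A * v s) s) :
    HasDerivAt (fun x => u x ^ 2 / k + v x ^ 2) (-(4 * A) * v s ^ 2) s := by
  refine (((hu.pow 2).div_const k).add (hv.pow 2)).congr_deriv ?_
  field_simp
  ring

variable {A b : ℝ}

theorem hasDerivAt_dampedSin (hb : b ≠ 0) (s : ℝ) :
    HasDerivAt (dampedSin A b) (dampedCos A b s - 2 * A * dampedSin A b s) s := by
  have he := ((hasDerivAt_id' s).const_mul (-A)).exp
  have hsin := ((hasDerivAt_id' s).const_mul b).sin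
  refine ((he.mul hsin).div_const b).congr_deriv ?_
  simp only [dampedCos, dampedSin]
  field_simp
  ring

theorem hasDerivAt_dampedCos (hb : b ≠ 0) (s : ℝ) :
    HasDerivAt (dampedCos A b) (-(b ^ 2 + A ^ 2) * dampedSin A b s) s := by
  have he := ((hasDerivAt_id' s).const_mul (-A)).exp
  have hcos := ((hasDerivAt_id' s).const_mul b).cos
  have hsin := ((hasDerivAt_id' s).const_mul b).sin
  refine (he.mul (hcos.add (hsin.const_mul (A / b)))).congr_deriv ?_
  simp only [dampedSin, Pi.add_apply]
  field_simp
  ring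

theorem exp_neg_mul_sq (A s : ℝ) : exp (-A * s) ^ 2 = exp (-2 * A * s) := by
  rw [← exp_nat_mul]
  ring_nf

theorem dampedSin_sq (A b s : ℝ) :
    dampedSin A b s ^ 2 = exp (-2 * A * s) * sin (b * s) ^ 2 / b ^ 2 := by
  rw [dampedSin, div_pow, mul_pow, exp_neg_mul_sq]

theorem dampedCos_sq_div_add_dampedSin_sq (A b k s : ℝ) :
    dampedCos A b s ^ 2 / k + dampedSin A b s ^ 2 =
      exp (-2 * A * s) *
        ((cos (b * s) + A / b * sin (b * s)) ^ 2 / k + sin (b * s) ^ 2 / b ^ 2) := by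
  rw [dampedSin_sq, dampedCos, mul_pow, exp_neg_mul_sq]
  ring

end

theorem viscous_wave_stationarity_general (A b c : ℝ) (hb : 0 < b)
    (h : c ^ 2 = b ^ 2 + A ^ 2) (t : ℝ) :
    Real.exp (-2 * A * t) *
        ((Real.cos (b * t) + (A / b) * Real.sin (b * t)) ^ 2 / c ^ 2
          + (Real.sin (b * t)) ^ 2 / b ^ 2)
      + 4 * A * ∫ s in (0 : ℝ)..t, Real.exp (-2 * A * s) * (Real.sin (b * s)) ^ 2 / b ^ 2
      = 1 / c ^ 2 := by
  set energy := fun s => dampedCos A b s ^ 2 / c ^ 2 + dampedSin A b s ^ 2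
  have hc : c ^ 2 ≠ 0 := by rw [h]; positivity
  have hderiv (s : ℝ) : HasDerivAt energy (-(4 * A) * dampedSin A b s ^ 2) s :=
    hasDerivAt_sq_div_add_sq_of_damped hc (h ▸ hasDerivAt_dampedCos hb.ne' s)
      (hasDerivAt_dampedSin hb.ne' s)
  have hcont : Continuous fun s => -(4 * A) * dampedSin A b s ^ 2 := by
    unfold dampedSin
    fun_prop
  have hftc := intervalIntegral.integral_eq_sub_of_hasDerivAt (fun s _ => hderiv s)
    (hcont.intervalIntegrable 0 t)
  have henergy0 : energy 0 = 1 / c ^ 2 := by simp [energy, dampedCos, dampedSin]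
  simp only [intervalIntegral.integral_const_mul, dampedSin_sq] at hftc
  rw [← dampedCos_sq_div_add_dampedSin_sq, ← henergy0]
  linarith

/-- Mode-by-mode stationarity of the Gaussian measure under the linear viscous wave flow:
for `c² = b² + A²`,
`e^{-2At}[ (cos(bt) + (A/b) sin(bt))²/c² + sin²(bt)/b² ] + 4A ∫₀ᵗ e^{-2As} sin²(bs)/b² ds = 1/c²`. -/
theorem viscous_wave_stationarity (A b c : ℝ) (hA : 0 ≤ A) (hb : 0 < b) (hc : 0 < c)
    (h : c ^ 2 = b ^ 2 + A ^ 2) (t : ℝ) (ht : 0 ≤ t) :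
    Real.exp (-2 * A * t) *
        ((Real.cos (b * t) + (A / b) * Real.sin (b * t)) ^ 2 / c ^ 2
          + (Real.sin (b * t)) ^ 2 / b ^ 2)
      + 4 * A * ∫ s in (0 : ℝ)..t, Real.exp (-2 * A * s) * (Real.sin (b * s)) ^ 2 / b ^ 2
      = 1 / c ^ 2 :=
  viscous_wave_stationarity_general A b c hb h t
end

section
/- Let k ≥ 1 be an integer and ε > 0. Then the sum over all k-tuples (n₁, …, n_k) ∈ (ℤ²)^k of (1 + |n₁ + ⋯ + n_k|²)^{-ε} · Π_{j=1}^{k} (1 + |n_j|²)^{-1} is finite, where |·| denotes the Euclidean norm on ℤ² ⊂ ℝ². -/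
open Real Finset

set_option maxHeartbeats 1000000

private def wgt (p : ℤ × ℤ) : ℝ := 1 + (p.1 : ℝ) ^ 2 + (p.2 : ℝ) ^ 2

private lemma one_le_wgt (p : ℤ × ℤ) : (1 : ℝ) ≤ wgt p := by
  unfold wgt; nlinarith [sq_nonneg ((p.1 : ℝ)), sq_nonneg ((p.2 : ℝ))]

private lemma wgt_pos (p : ℤ × ℤ) : (0 : ℝ) < wgt p :=
  lt_of_lt_of_le one_pos (one_le_wgt p)

private lemma summable_one_add_sq {t : ℝ} (ht : 1 / 2 < t) :
    Summable (fun n : ℤ => (1 + (n : ℝ) ^ 2) ^ (-t)) := by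
  have hb : (1 : ℝ) < 2 * t := by linarith
  have h := summable_abs_int_rpow hb
  have hfin : Summable (fun n : ℤ => if n = 0 then (1 : ℝ) else 0) := by
    refine summable_of_ne_finset_zero (s := {0}) ?_
    intro n hn
    simp only [Finset.mem_singleton] at hn
    simp [hn]
  have h2 := h.add hfin
  refine Summable.of_nonneg_of_le (fun n => by positivity) (fun n => ?_) h2
  rcases eq_or_ne n 0 with rfl | hn
  · simp only [Int.cast_zero, abs_zero, eq_self_iff_true, if_true]
    have h1 : ((1:ℝ) + 0 ^ 2) ^ (-t) = 1 := by norm_num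
    rw [h1]
    have h0 : (0:ℝ) ≤ (0:ℝ) ^ (-(2*t)) := Real.rpow_nonneg le_rfl _
    linarith
  · have h0 : (0 : ℝ) < (n : ℝ) ^ 2 := by
      have : (n : ℝ) ≠ 0 := Int.cast_ne_zero.mpr hn
      positivity
    have h1 : (1 + (n : ℝ) ^ 2) ^ (-t) ≤ ((n : ℝ) ^ 2) ^ (-t) :=
      Real.rpow_le_rpow_of_nonpos h0 (by linarith) (by linarith)
    have h2 : ((n : ℝ) ^ 2) ^ (-t) = |(n : ℝ)| ^ (-(2 * t)) := by
      rw [← sq_abs, ← Real.rpow_natCast |(n : ℝ)| 2, ← Real.rpow_mul (abs_nonneg _)]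
      norm_num
    simp only [hn, if_false, add_zero]
    calc (1 + (n : ℝ) ^ 2) ^ (-t) ≤ ((n : ℝ) ^ 2) ^ (-t) := h1
      _ = |(n : ℝ)| ^ (-(2 * t)) := h2

private lemma summable_wgt {s : ℝ} (hs : 1 < s) :
    Summable (fun p : ℤ × ℤ => wgt p ^ (-s)) := by
  have ht : 1 / 2 < s / 2 := by linarith
  have h := (summable_one_add_sq ht).mul_of_nonneg (summable_one_add_sq ht)
    (fun n => by positivity) (fun n => by positivity)
  refine h.of_nonneg_of_le (fun p => Real.rpow_nonneg (wgt_pos p).le _) (fun p => ?_)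
  set a : ℝ := (p.1 : ℝ)
  set b : ℝ := (p.2 : ℝ)
  have hA : (0 : ℝ) < 1 + a ^ 2 := by positivity
  have hB : (0 : ℝ) < 1 + b ^ 2 := by positivity
  have hW : (0 : ℝ) < wgt p := wgt_pos p
  have hle : (1 + a ^ 2) * (1 + b ^ 2) ≤ wgt p ^ (2 : ℕ) := by
    unfold wgt; nlinarith [sq_nonneg a, sq_nonneg b, sq_nonneg (a * b)]
  have h1 : (wgt p ^ (2 : ℕ)) ^ (-(s / 2)) ≤ ((1 + a ^ 2) * (1 + b ^ 2)) ^ (-(s / 2)) :=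
    Real.rpow_le_rpow_of_nonpos (by positivity) hle (by linarith)
  have h2 : (wgt p ^ (2 : ℕ)) ^ (-(s / 2)) = wgt p ^ (-s) := by
    rw [← Real.rpow_natCast (wgt p) 2, ← Real.rpow_mul hW.le]
    congr 1
    ring
  have h3 : ((1 + a ^ 2) * (1 + b ^ 2)) ^ (-(s / 2))
      = (1 + a ^ 2) ^ (-(s / 2)) * (1 + b ^ 2) ^ (-(s / 2)) :=
    Real.mul_rpow hA.le hB.le
  calc wgt p ^ (-s) = (wgt p ^ (2 : ℕ)) ^ (-(s / 2)) := h2.symm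
    _ ≤ ((1 + a ^ 2) * (1 + b ^ 2)) ^ (-(s / 2)) := h1
    _ = (1 + a ^ 2) ^ (-(s / 2)) * (1 + b ^ 2) ^ (-(s / 2)) := h3

private lemma summable_pi_prod : ∀ (k : ℕ) (c : Fin k → ℤ × ℤ → ℝ),
    (∀ j, Summable (c j)) → (∀ j x, 0 ≤ c j x) →
    Summable (fun n : Fin k → ℤ × ℤ => ∏ j, c j (n j))
  | 0, c, _, _ => by
    simp only [Finset.univ_eq_empty, Finset.prod_empty]
    exact .of_finite
  | (k + 1), c, hs, hnn => by
    have ih := summable_pi_prod k (fun j => c j.succ) (fun j => hs _) (fun j x => hnn _ _)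
    have h := (hs 0).mul_of_nonneg ih (fun x => hnn 0 x)
      (fun m => Finset.prod_nonneg fun j _ => hnn _ _)
    rw [← Equiv.summable_iff (Fin.consEquiv (fun _ : Fin (k + 1) => ℤ × ℤ))]
    refine h.congr fun x => ?_
    simp [Fin.prod_univ_succ]

private def shear {k : ℕ} (i : Fin k) : (Fin k → ℤ × ℤ) ≃ (Fin k → ℤ × ℤ) where
  toFun n := Function.update n i (∑ j, n j)
  invFun m := Function.update m i (m i - ∑ j ∈ univ.erase i, m j)
  left_inv n := by
    funext j
    rcases eq_or_ne j i with rfl | hj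
    · simp only [Function.update_self]
      have h1 : ∑ x ∈ univ.erase j, Function.update n j (∑ l, n l) x
          = ∑ x ∈ univ.erase j, n x :=
        Finset.sum_congr rfl fun x hx =>
          Function.update_of_ne (Finset.ne_of_mem_erase hx) _ _
      rw [h1, ← Finset.add_sum_erase _ _ (Finset.mem_univ j)]
      abel
    · simp [Function.update_of_ne hj]
  right_inv m := by
    funext j
    rcases eq_or_ne j i with rfl | hj
    · simp only [Function.update_self]
      rw [← Finset.add_sum_erase _ _ (Finset.mem_univ j), Function.update_self]
      have h1 : ∑ x ∈ univ.erase j, Function.update m j (m j - ∑ l ∈ univ.erase j, m l) x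
          = ∑ x ∈ univ.erase j, m x :=
        Finset.sum_congr rfl fun x hx =>
          Function.update_of_ne (Finset.ne_of_mem_erase hx) _ _
      rw [h1]
      abel
    · simp [Function.update_of_ne hj]

private lemma summable_g {k : ℕ} (i : Fin k) {s₁ s₂ : ℝ} (hs₁ : 1 < s₁) (hs₂ : 1 < s₂) :
    Summable (fun n : Fin k → ℤ × ℤ =>
      wgt (∑ j, n j) ^ (-s₁) * ∏ j ∈ univ.erase i, wgt (n j) ^ (-s₂)) := by
  set c : Fin k → ℤ × ℤ → ℝ := fun j p => if j = i then wgt p ^ (-s₁) else wgt p ^ (-s₂)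
    with hc
  have hsum : Summable (fun m : Fin k → ℤ × ℤ => ∏ j, c j (m j)) := by
    refine summable_pi_prod k c (fun j => ?_) (fun j x => ?_)
    · by_cases h : j = i
      · simpa [hc, h] using summable_wgt hs₁
      · simpa [hc, h] using summable_wgt hs₂
    · simp only [hc]
      split <;> exact Real.rpow_nonneg (wgt_pos _).le _
  rw [← Equiv.summable_iff (shear i).symm]
  refine hsum.congr fun m => ?_
  have hsumEq : ∑ j, ((shear i).symm m) j = m i := by
    show ∑ j, Function.update m i (m i - ∑ l ∈ univ.erase i, m l) j = m i
    rw [← Finset.add_sum_erase _ _ (Finset.mem_univ i), Function.update_self]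
    have h1 : ∑ x ∈ univ.erase i, Function.update m i (m i - ∑ l ∈ univ.erase i, m l) x
        = ∑ x ∈ univ.erase i, m x :=
      Finset.sum_congr rfl fun x hx =>
        Function.update_of_ne (Finset.ne_of_mem_erase hx) _ _
    rw [h1]
    abel
  have hcoord : ∀ j ∈ univ.erase i, ((shear i).symm m) j = m j := fun j hj =>
    Function.update_of_ne (Finset.ne_of_mem_erase hj) _ _
  show ∏ j, c j (m j) = wgt (∑ j, ((shear i).symm m) j) ^ (-s₁) *
      ∏ j ∈ univ.erase i, wgt (((shear i).symm m) j) ^ (-s₂)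
  rw [hsumEq, ← Finset.mul_prod_erase _ _ (Finset.mem_univ i)]
  have h2 : c i (m i) = wgt (m i) ^ (-s₁) := by simp [hc]
  rw [h2]
  congr 1
  refine Finset.prod_congr rfl fun j hj => ?_
  rw [hcoord j hj]
  simp [hc, Finset.ne_of_mem_erase hj]

private lemma key_bound {k : ℕ} (hk : 1 ≤ k) {ε θ : ℝ} (hθ0 : 0 < θ) (hθ1 : θ ≤ 1)
    (hθε : θ ≤ ε) (n : Fin k → ℤ × ℤ) (i : Fin k) (hi : ∀ j, wgt (n j) ≤ wgt (n i)) :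
    wgt (∑ j, n j) ^ (-ε) * ∏ j, (wgt (n j))⁻¹ ≤
      (k : ℝ) ^ 2 * (wgt (∑ j, n j) ^ (-(1 + (ε - θ))) *
        ∏ j ∈ univ.erase i, wgt (n j) ^ (-(1 + θ / k))) := by
  set A := wgt (∑ j, n j) with hAdef
  set B := wgt (n i) with hBdef
  have hA1 : (1 : ℝ) ≤ A := one_le_wgt _
  have hB1 : (1 : ℝ) ≤ B := one_le_wgt _
  have hA0 : (0 : ℝ) < A := lt_of_lt_of_le one_pos hA1
  have hB0 : (0 : ℝ) < B := lt_of_lt_of_le one_pos hB1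
  have hk0 : (0 : ℝ) < k := by exact_mod_cast hk
  have hk1 : (1 : ℝ) ≤ (k : ℝ) := by exact_mod_cast hk
  -- Step: A ≤ k^2 * B
  have hAB : A ≤ (k : ℝ) ^ 2 * B := by
    have ha := sq_sum_le_card_mul_sum_sq (s := (univ : Finset (Fin k)))
      (f := fun j => ((n j).1 : ℝ))
    have hb := sq_sum_le_card_mul_sum_sq (s := (univ : Finset (Fin k)))
      (f := fun j => ((n j).2 : ℝ))
    have hsum_le : ∑ j, (((n j).1 : ℝ) ^ 2 + ((n j).2 : ℝ) ^ 2) ≤ (k : ℝ) * (B - 1) := by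
      have : ∀ j : Fin k, ((n j).1 : ℝ) ^ 2 + ((n j).2 : ℝ) ^ 2 ≤ B - 1 := by
        intro j
        have h := hi j
        rw [hBdef] at h ⊢
        unfold wgt at h ⊢
        linarith
      calc ∑ j, (((n j).1 : ℝ) ^ 2 + ((n j).2 : ℝ) ^ 2) ≤ ∑ _j : Fin k, (B - 1) :=
            Finset.sum_le_sum fun j _ => this j
        _ = (k : ℝ) * (B - 1) := by
            rw [Finset.sum_const, Finset.card_univ, Fintype.card_fin, nsmul_eq_mul]
    have hAeq : A = 1 + (∑ j, ((n j).1 : ℝ)) ^ 2 + (∑ j, ((n j).2 : ℝ)) ^ 2 := by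
      rw [hAdef]
      unfold wgt
      rw [Prod.fst_sum, Prod.snd_sum]
      push_cast
      ring
    rw [Finset.sum_add_distrib] at hsum_le
    rw [Finset.card_univ, Fintype.card_fin] at ha hb
    rw [hAeq]
    nlinarith [sq_nonneg ((k:ℝ) - 1), hB1, mul_le_mul_of_nonneg_left hsum_le hk0.le, ha, hb,
      hk1]
  -- Step: split B⁻¹
  have hBsplit : B⁻¹ = B ^ (-(1 - θ)) * B ^ (-θ) := by
    rw [← Real.rpow_add hB0, ← Real.rpow_neg_one B]
    congr 1
    ring
  -- Step: B ^ (-(1-θ)) ≤ k^2 * A ^ (-(1-θ))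
  have hstep3 : B ^ (-(1 - θ)) ≤ (k : ℝ) ^ 2 * A ^ (-(1 - θ)) := by
    have hk2 : (1 : ℝ) ≤ (k : ℝ) ^ 2 := by nlinarith
    have h1 : ((k : ℝ) ^ 2 * B) ^ (-(1 - θ)) ≤ A ^ (-(1 - θ)) :=
      Real.rpow_le_rpow_of_nonpos hA0 hAB (by linarith)
    have h2 : ((k : ℝ) ^ 2 * B) ^ (-(1 - θ))
        = ((k : ℝ) ^ 2) ^ (-(1 - θ)) * B ^ (-(1 - θ)) :=
      Real.mul_rpow (by positivity) hB0.le
    have h3 : B ^ (-(1 - θ)) = ((k : ℝ) ^ 2) ^ (1 - θ) * (((k : ℝ) ^ 2) ^ (-(1 - θ)) *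
        B ^ (-(1 - θ))) := by
      rw [← mul_assoc, ← Real.rpow_add (by positivity : (0:ℝ) < (k:ℝ) ^ 2)]
      norm_num
    have h4 : ((k : ℝ) ^ 2) ^ (1 - θ) ≤ (k : ℝ) ^ 2 := by
      calc ((k : ℝ) ^ 2) ^ (1 - θ) ≤ ((k : ℝ) ^ 2) ^ (1 : ℝ) :=
            Real.rpow_le_rpow_of_exponent_le hk2 (by linarith)
        _ = (k : ℝ) ^ 2 := Real.rpow_one _
    calc B ^ (-(1 - θ)) = ((k : ℝ) ^ 2) ^ (1 - θ) * (((k : ℝ) ^ 2) ^ (-(1 - θ)) *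
          B ^ (-(1 - θ))) := h3
      _ ≤ ((k : ℝ) ^ 2) ^ (1 - θ) * A ^ (-(1 - θ)) := by
          rw [← h2]
          exact mul_le_mul_of_nonneg_left h1 (Real.rpow_nonneg (by positivity) _)
      _ ≤ (k : ℝ) ^ 2 * A ^ (-(1 - θ)) :=
          mul_le_mul_of_nonneg_right h4 (Real.rpow_nonneg hA0.le _)
  -- Step: B ^ (-θ) ≤ ∏ wgt ^ (-(θ/k))
  have hstep4 : B ^ (-θ) ≤ ∏ j ∈ univ.erase i, wgt (n j) ^ (-(θ / k)) := by
    have hprod_le : ∏ j ∈ univ.erase i, wgt (n j) ^ (θ / k) ≤ B ^ θ := by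
      have hcard : (univ.erase i).card = k - 1 := by
        rw [Finset.card_erase_of_mem (Finset.mem_univ i), Finset.card_univ, Fintype.card_fin]
      calc ∏ j ∈ univ.erase i, wgt (n j) ^ (θ / k)
          ≤ ∏ _j ∈ univ.erase i, B ^ (θ / k) :=
            Finset.prod_le_prod (fun j _ => Real.rpow_nonneg (wgt_pos _).le _)
              (fun j _ => Real.rpow_le_rpow (wgt_pos _).le (hi j) (by positivity))
        _ = (B ^ (θ / k)) ^ ((k - 1 : ℕ) : ℕ) := by rw [Finset.prod_const, hcard]
        _ = B ^ (θ / k * ((k - 1 : ℕ) : ℝ)) := by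
            rw [← Real.rpow_natCast (B ^ (θ / k)) (k - 1), ← Real.rpow_mul hB0.le]
        _ ≤ B ^ θ := by
            apply Real.rpow_le_rpow_of_exponent_le hB1
            have hcast : ((k - 1 : ℕ) : ℝ) = (k : ℝ) - 1 := by
              have := Nat.cast_sub hk (R := ℝ)
              simpa using this
            rw [hcast, div_mul_eq_mul_div, div_le_iff₀ hk0]
            nlinarith
    have hprod_pos : (0 : ℝ) < ∏ j ∈ univ.erase i, wgt (n j) ^ (θ / k) :=
      Finset.prod_pos fun j _ => Real.rpow_pos_of_pos (wgt_pos _) _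
    have hinv : (B ^ θ)⁻¹ ≤ (∏ j ∈ univ.erase i, wgt (n j) ^ (θ / k))⁻¹ :=
      inv_anti₀ hprod_pos hprod_le
    calc B ^ (-θ) = (B ^ θ)⁻¹ := by rw [Real.rpow_neg hB0.le]
      _ ≤ (∏ j ∈ univ.erase i, wgt (n j) ^ (θ / k))⁻¹ := hinv
      _ = ∏ j ∈ univ.erase i, wgt (n j) ^ (-(θ / k)) := by
          rw [← Finset.prod_inv_distrib]
          exact Finset.prod_congr rfl fun j _ => by rw [Real.rpow_neg (wgt_pos _).le]
  -- Combine
  have hprod_split : ∏ j, (wgt (n j))⁻¹ = B⁻¹ * ∏ j ∈ univ.erase i, (wgt (n j))⁻¹ :=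
    (Finset.mul_prod_erase _ _ (Finset.mem_univ i)).symm
  have hP1 : (0 : ℝ) ≤ ∏ j ∈ univ.erase i, (wgt (n j))⁻¹ :=
    Finset.prod_nonneg fun j _ => inv_nonneg.mpr (wgt_pos _).le
  have hAe : (0 : ℝ) ≤ A ^ (-ε) := Real.rpow_nonneg hA0.le _
  calc wgt (∑ j, n j) ^ (-ε) * ∏ j, (wgt (n j))⁻¹
      = A ^ (-ε) * B ^ (-(1 - θ)) * B ^ (-θ) * ∏ j ∈ univ.erase i, (wgt (n j))⁻¹ := by
        rw [hprod_split, hBsplit]; ring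
    _ ≤ A ^ (-ε) * ((k : ℝ) ^ 2 * A ^ (-(1 - θ))) *
          (∏ j ∈ univ.erase i, wgt (n j) ^ (-(θ / k))) *
          ∏ j ∈ univ.erase i, (wgt (n j))⁻¹ := by
        have hm1 : A ^ (-ε) * B ^ (-(1 - θ)) ≤ A ^ (-ε) * ((k : ℝ) ^ 2 * A ^ (-(1 - θ))) :=
          mul_le_mul_of_nonneg_left hstep3 hAe
        have hm2 : A ^ (-ε) * B ^ (-(1 - θ)) * B ^ (-θ)
            ≤ A ^ (-ε) * ((k : ℝ) ^ 2 * A ^ (-(1 - θ))) *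
              ∏ j ∈ univ.erase i, wgt (n j) ^ (-(θ / k)) := by
          apply mul_le_mul hm1 hstep4 (Real.rpow_nonneg hB0.le _)
          positivity
        exact mul_le_mul_of_nonneg_right hm2 hP1
    _ = (k : ℝ) ^ 2 * (A ^ (-(1 + (ε - θ))) *
          ∏ j ∈ univ.erase i, wgt (n j) ^ (-(1 + θ / k))) := by
        have e1 : A ^ (-ε) * A ^ (-(1 - θ)) = A ^ (-(1 + (ε - θ))) := by
          rw [← Real.rpow_add hA0]; ring_nf
        have e2 : (∏ j ∈ univ.erase i, wgt (n j) ^ (-(θ / k))) *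
            ∏ j ∈ univ.erase i, (wgt (n j))⁻¹
            = ∏ j ∈ univ.erase i, wgt (n j) ^ (-(1 + θ / k)) := by
          rw [← Finset.prod_mul_distrib]
          refine Finset.prod_congr rfl fun j _ => ?_
          rw [← Real.rpow_neg_one (wgt (n j)), ← Real.rpow_add (wgt_pos _)]
          ring_nf
        calc A ^ (-ε) * ((k : ℝ) ^ 2 * A ^ (-(1 - θ))) *
              (∏ j ∈ univ.erase i, wgt (n j) ^ (-(θ / k))) *
              ∏ j ∈ univ.erase i, (wgt (n j))⁻¹
            = (k : ℝ) ^ 2 * ((A ^ (-ε) * A ^ (-(1 - θ))) *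
              ((∏ j ∈ univ.erase i, wgt (n j) ^ (-(θ / k))) *
              ∏ j ∈ univ.erase i, (wgt (n j))⁻¹)) := by ring
          _ = (k : ℝ) ^ 2 * (A ^ (-(1 + (ε - θ))) *
              ∏ j ∈ univ.erase i, wgt (n j) ^ (-(1 + θ / k))) := by rw [e1, e2]

/-- Summability of the multilinear sum controlling the `k`-th Wick power of the
stochastic convolution:
`Σ_{n₁,…,n_k ∈ ℤ²} ⟨n₁ + ⋯ + n_k⟩^{-2ε} ⟨n₁⟩^{-2} ⋯ ⟨n_k⟩^{-2} < ∞`,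
written with `⟨n⟩² = 1 + |n|²`. -/
theorem wick_power_sum_summable (k : ℕ) (hk : 1 ≤ k) (ε : ℝ) (hε : 0 < ε) :
    Summable (fun n : Fin k → ℤ × ℤ =>
      (1 + ((∑ j, (n j).1 : ℤ) : ℝ) ^ 2 + ((∑ j, (n j).2 : ℤ) : ℝ) ^ 2) ^ (-ε) *
        ∏ j, (1 + ((n j).1 : ℝ) ^ 2 + ((n j).2 : ℝ) ^ 2)⁻¹) := by
  set θ : ℝ := min ε 1 / 2 with hθdef
  have hθ0 : 0 < θ := by
    have := lt_min hε one_pos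
    positivity
  have hθ1 : θ ≤ 1 := by
    have : min ε 1 ≤ 1 := min_le_right _ _
    rw [hθdef]; linarith
  have hθε : θ < ε := by
    have : min ε 1 ≤ ε := min_le_left _ _
    rw [hθdef]; linarith
  have hs₁ : 1 < 1 + (ε - θ) := by linarith
  have hk0 : (0 : ℝ) < k := by exact_mod_cast hk
  have hs₂ : 1 < 1 + θ / k := by
    have : 0 < θ / k := by positivity
    linarith
  set g : Fin k → (Fin k → ℤ × ℤ) → ℝ := fun i n =>
    (k : ℝ) ^ 2 * (wgt (∑ j, n j) ^ (-(1 + (ε - θ))) *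
      ∏ j ∈ univ.erase i, wgt (n j) ^ (-(1 + θ / k))) with hgdef
  have hg_sum : ∀ i : Fin k, Summable (g i) := fun i =>
    ((summable_g i hs₁ hs₂).mul_left _)
  have hg_nonneg : ∀ (i : Fin k) (n : Fin k → ℤ × ℤ), 0 ≤ g i n := by
    intro i n
    have h1 : (0:ℝ) ≤ wgt (∑ j, n j) ^ (-(1 + (ε - θ))) := Real.rpow_nonneg (wgt_pos _).le _
    have h2 : (0:ℝ) ≤ ∏ j ∈ univ.erase i, wgt (n j) ^ (-(1 + θ / k)) :=
      Finset.prod_nonneg fun j _ => Real.rpow_nonneg (wgt_pos _).le _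
    exact mul_nonneg (by positivity) (mul_nonneg h1 h2)
  have hG : Summable (fun n : Fin k → ℤ × ℤ => ∑ i, g i n) :=
    summable_sum fun i _ => hg_sum i
  refine hG.of_nonneg_of_le (fun n => ?_) (fun n => ?_)
  · have h1 : (0:ℝ) ≤ (1 + ((∑ j, (n j).1 : ℤ) : ℝ) ^ 2 + ((∑ j, (n j).2 : ℤ) : ℝ) ^ 2) ^ (-ε) := by
      positivity
    have h2 : (0:ℝ) ≤ ∏ j, (1 + ((n j).1 : ℝ) ^ 2 + ((n j).2 : ℝ) ^ 2)⁻¹ := by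
      refine Finset.prod_nonneg fun j _ => ?_
      positivity
    exact mul_nonneg h1 h2
  · haveI : Nonempty (Fin k) := Fin.pos_iff_nonempty.mp hk
    obtain ⟨i, _, hi⟩ := Finset.exists_max_image (univ : Finset (Fin k))
      (fun j => wgt (n j)) Finset.univ_nonempty
    have hEq : (1 + ((∑ j, (n j).1 : ℤ) : ℝ) ^ 2 + ((∑ j, (n j).2 : ℤ) : ℝ) ^ 2) ^ (-ε) *
        ∏ j, (1 + ((n j).1 : ℝ) ^ 2 + ((n j).2 : ℝ) ^ 2)⁻¹
        = wgt (∑ j, n j) ^ (-ε) * ∏ j, (wgt (n j))⁻¹ := by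
      unfold wgt
      rw [Prod.fst_sum, Prod.snd_sum]
    rw [hEq]
    calc wgt (∑ j, n j) ^ (-ε) * ∏ j, (wgt (n j))⁻¹
        ≤ g i n := key_bound hk hθ0 hθ1 hθε.le n i (fun j => hi j (Finset.mem_univ j))
      _ ≤ ∑ i', g i' n :=
        Finset.single_le_sum (fun i' _ => hg_nonneg i' n) (Finset.mem_univ i)
end
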